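/- Let ⦀·⦀ be a norm on ℝ^d, φ : {0,…,d} → ℝ̄, and x ∈ ℝ^d with x ≠ 0; set l = ℓ0(x) ≥ 1 and suppose −∞ < φ(l) < +∞. Then y ∈ ∂_¢(φ∘ℓ0)(x) if and only if both (i) y belongs to the normal cone N_{B_l}( x / ⦀x⦀_l ) to the unit ball B_l of the coordinate-l norm at x/⦀x⦀_l, and (ii) l maximizes j ↦ ⦀y⦀_{j,★} − φ(j) over j ∈ {0,…,d} (with the convention ⦀·⦀_{0,★} = 0 and where the subtraction is the Moreau lower addition). -/

import Mathlib

open scoped BigOperators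

noncomputable section

/-- The Euclidean pairing `⟨x,y⟩ = ∑ i, x i * y i` on `Fin d → ℝ`. -/
def dotp {d : ℕ} (x y : Fin d → ℝ) : ℝ := ∑ i, x i * y i

/-- The coordinate subspace `R_K` of vectors vanishing outside `K`. -/
def RK {d : ℕ} (K : Finset (Fin d)) : Set (Fin d → ℝ) := {x | ∀ j ∉ K, x j = 0}

/-- Orthogonal projection onto `R_K`. -/
def projK {d : ℕ} (K : Finset (Fin d)) (x : Fin d → ℝ) : Fin d → ℝ :=
  fun i => if i ∈ K then x i else 0

/-- The ℓ0 pseudonorm: number of nonzero components. -/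
def ell0 {d : ℕ} (x : Fin d → ℝ) : ℕ := (Function.support x).ncard

/-- `N` is a norm on `ℝ^d`. -/
structure IsNorm {d : ℕ} (N : (Fin d → ℝ) → ℝ) : Prop where
  eq_zero_iff : ∀ x, N x = 0 ↔ x = 0
  smul : ∀ (c : ℝ) (x : Fin d → ℝ), N (c • x) = |c| * N x
  triangle : ∀ x y, N (x + y) ≤ N x + N y

/-- `⦀y⦀_{K,★}`: the dual norm (w.r.t. the Euclidean pairing), on the subspace `R_K`,
of the restriction of `N` to `R_K`. -/
def restStar {d : ℕ} (N : (Fin d → ℝ) → ℝ) (K : Finset (Fin d)) (y : Fin d → ℝ) : ℝ :=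
  sSup {r | ∃ x ∈ RK K, N x ≤ 1 ∧ r = dotp x y}

/-- The dual coordinate-k norm `⦀y⦀_{k,★} = sup_{|K| ≤ k} ⦀y_K⦀_{K,★}`. -/
def dualCoord {d : ℕ} (N : (Fin d → ℝ) → ℝ) (k : ℕ) (y : Fin d → ℝ) : ℝ :=
  sSup {r | ∃ K : Finset (Fin d), K.card ≤ k ∧ r = restStar N K (projK K y)}

/-- The coordinate-k norm: the dual norm of the dual coordinate-k norm. -/
def coordNorm {d : ℕ} (N : (Fin d → ℝ) → ℝ) (k : ℕ) (x : Fin d → ℝ) : ℝ :=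
  sSup {r | ∃ y : Fin d → ℝ, dualCoord N k y ≤ 1 ∧ r = dotp x y}

/-- The Capra coupling `¢(x,y) = ⟨x,y⟩/⦀x⦀` (with `¢(0,y) = 0`). -/
def capra {d : ℕ} (N : (Fin d → ℝ) → ℝ) (x y : Fin d → ℝ) : ℝ :=
  if x = 0 then 0 else dotp x y / N x

/-- Capra conjugate `f^¢(y) = sup_x ( ¢(x,y) ∔ (−f(x)) )`.
(EReal addition is the Moreau lower addition: `⊤ + ⊥ = ⊥`.) -/
def capraConj {d : ℕ} (N : (Fin d → ℝ) → ℝ) (f : (Fin d → ℝ) → EReal)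
    (y : Fin d → ℝ) : EReal :=
  ⨆ x : Fin d → ℝ, ((capra N x y : ℝ) : EReal) + (- f x)

/-- Capra biconjugate `f^{¢¢'}(x) = sup_y ( ¢(x,y) ∔ (−f^¢(y)) )`. -/
def capraBiconj {d : ℕ} (N : (Fin d → ℝ) → ℝ) (f : (Fin d → ℝ) → EReal)
    (x : Fin d → ℝ) : EReal :=
  ⨆ y : Fin d → ℝ, ((capra N x y : ℝ) : EReal) + (- capraConj N f y)

/-- Fenchel conjugate `g^★(y) = sup_x ( ⟨x,y⟩ ∔ (−g(x)) )`. -/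
def fenchelConj {d : ℕ} (g : (Fin d → ℝ) → EReal) (y : Fin d → ℝ) : EReal :=
  ⨆ x : Fin d → ℝ, ((dotp x y : ℝ) : EReal) + (- g x)


/-!
The Capra coupling satisfies `¢(z, y) ≤ ⦀y⦀_{ℓ0(z),★}`, and over the vectors with exactly `j ≥ 1`
nonzero entries its supremum is `⦀y⦀_{j,★}`. Hence `(φ ∘ ℓ0)^¢(y) = sup_{j ≤ d} (⦀y⦀_{j,★} ∔ -φ j)`,
and since `¢(x, y) ∔ -φ l ≤ ⦀y⦀_{l,★} ∔ -φ l` with `φ l` finite, the subgradient equality splits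
into `¢(x, y) = ⦀y⦀_{l,★}` and the maximality of `l`. On vectors with at most `l` nonzero entries
the coordinate-`l` norm coincides with the source norm (Hahn–Banach), while `⟨x', y⟩ ≤ ⦀y⦀_{l,★}`
on `B_l`; so `¢(x, y) = ⦀y⦀_{l,★}` says exactly that `y` is normal to `B_l` at `x / ⦀x⦀_l`.
-/

open Filter Topology

namespace IsNorm

variable {d : ℕ} {N : (Fin d → ℝ) → ℝ}

theorem map_zero (hN : IsNorm N) : N 0 = 0 := (hN.eq_zero_iff 0).2 rfl

theorem map_neg (hN : IsNorm N) (z : Fin d → ℝ) : N (-z) = N z := by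
  simpa using hN.smul (-1) z

theorem nonneg (hN : IsNorm N) (z : Fin d → ℝ) : 0 ≤ N z := by
  have h := hN.triangle z (-z)
  rw [add_neg_cancel, hN.map_zero, hN.map_neg] at h
  linarith

theorem pos (hN : IsNorm N) {z : Fin d → ℝ} (hz : z ≠ 0) : 0 < N z :=
  (hN.nonneg z).lt_of_ne fun h => hz ((hN.eq_zero_iff z).1 h.symm)

theorem inv_smul_self (hN : IsNorm N) {z : Fin d → ℝ} (hz : z ≠ 0) : N ((N z)⁻¹ • z) = 1 := by
  rw [hN.smul, abs_of_pos (inv_pos.2 (hN.pos hz)), inv_mul_cancel₀ (hN.pos hz).ne']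

theorem convexOn (hN : IsNorm N) : ConvexOn ℝ Set.univ N := by
  refine ⟨convex_univ, fun x _ y _ a b ha hb _ => ?_⟩
  calc N (a • x + b • y) ≤ N (a • x) + N (b • y) := hN.triangle _ _
    _ = a • N x + b • N y := by rw [hN.smul, hN.smul, abs_of_nonneg ha, abs_of_nonneg hb]; rfl

theorem continuous (hN : IsNorm N) : Continuous N :=
  continuousOn_univ.1 (by simpa using hN.convexOn.continuousOn_interior)

theorem exists_pos_mul_norm_le (hN : IsNorm N) : ∃ c > 0, ∀ z, c * ‖z‖ ≤ N z := by
  obtain ⟨c, hc, hcN⟩ := (isCompact_sphere (0 : Fin d → ℝ) 1).exists_forall_le'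
    hN.continuous.continuousOn fun z hz => hN.pos (ne_zero_of_mem_unit_sphere ⟨z, hz⟩)
  refine ⟨c, hc, fun z => ?_⟩
  rcases eq_or_ne z 0 with rfl | hz
  · simp [hN.map_zero]
  have hnz : 0 < ‖z‖ := norm_pos_iff.2 hz
  have h := hcN (‖z‖⁻¹ • z) (by simp [norm_smul, hnz.ne'])
  rw [hN.smul, abs_of_pos (inv_pos.2 hnz), le_inv_mul_iff₀ hnz] at h
  linarith

theorem exists_dotp_le (hN : IsNorm N) (y : Fin d → ℝ) :
    ∃ C, ∀ x, N x ≤ 1 → dotp x y ≤ C := by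
  obtain ⟨c, hc, hcN⟩ := hN.exists_pos_mul_norm_le
  obtain ⟨C, hC⟩ := (isCompact_closedBall (0 : Fin d → ℝ) c⁻¹).bddAbove_image
    (f := fun x => dotp x y) (by unfold dotp; fun_prop)
  refine ⟨C, fun x hx => hC ⟨x, ?_, rfl⟩⟩
  rw [mem_closedBall_zero_iff, ← mul_one c⁻¹, le_inv_mul_iff₀ hc]
  exact (hcN x).trans hx

theorem exists_dual_vector (hN : IsNorm N) {x : Fin d → ℝ} (hx : x ≠ 0) :
    ∃ u, dotp x u = N x ∧ ∀ z, dotp z u ≤ N z := by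
  let f := LinearPMap.mkSpanSingleton (K := ℝ) (L := ℝ) (σ := RingHom.id ℝ) x (N x) hx
  have hfN : ∀ v : f.domain, f v ≤ N v := by
    rintro ⟨v, hv⟩
    obtain ⟨c, rfl⟩ := Submodule.mem_span_singleton.1 hv
    calc f ⟨c • x, hv⟩ = c * N x := LinearPMap.mkSpanSingleton'_apply x (N x) _ c hv
      _ ≤ |c| * N x := mul_le_mul_of_nonneg_right (le_abs_self c) (hN.nonneg x)
      _ = N (c • x) := (hN.smul c x).symm
  obtain ⟨g, hgf, hgN⟩ := exists_extension_of_le_sublinear f N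
    (fun c hc z => by rw [hN.smul, abs_of_pos hc]) hN.triangle hfN
  have hg : ∀ z, dotp z (fun i => g fun j => if i = j then 1 else 0) = g z := fun z =>
    (LinearMap.pi_apply_eq_sum_univ g z).symm
  refine ⟨_, ?_, fun z => (hg z).trans_le (hgN z)⟩
  rw [hg, hgf ⟨x, Submodule.mem_span_singleton_self x⟩]
  exact LinearPMap.mkSpanSingleton'_apply_self x (N x) _ _

end IsNorm

section Pairing

variable {d : ℕ}

theorem dotp_zero_left (y : Fin d → ℝ) : dotp 0 y = 0 := zero_dotProduct y

theorem dotp_zero_right (x : Fin d → ℝ) : dotp x 0 = 0 := dotProduct_zero x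

theorem dotp_neg_left (x y : Fin d → ℝ) : dotp (-x) y = -dotp x y := neg_dotProduct x y

theorem dotp_sub_left (x x' y : Fin d → ℝ) : dotp (x - x') y = dotp x y - dotp x' y :=
  sub_dotProduct x x' y

theorem dotp_smul_left (c : ℝ) (x y : Fin d → ℝ) : dotp (c • x) y = c * dotp x y :=
  smul_dotProduct c x y

theorem dotp_smul_right (c : ℝ) (x y : Fin d → ℝ) : dotp x (c • y) = c * dotp x y :=
  dotProduct_smul c x y

theorem dotp_projK {K : Finset (Fin d)} {x : Fin d → ℝ} (hx : x ∈ RK K) (y : Fin d → ℝ) :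
    dotp x (projK K y) = dotp x y := by
  refine Finset.sum_congr rfl fun i _ => ?_
  by_cases hi : i ∈ K <;> simp [projK, hi, hx i]

end Pairing

section Sparsity

variable {d : ℕ}

theorem ell0_le (z : Fin d → ℝ) : ell0 z ≤ d := by
  simpa [ell0] using Set.ncard_le_ncard (Set.subset_univ (Function.support z)) (Set.toFinite _)

theorem ell0_eq_zero_iff {z : Fin d → ℝ} : ell0 z = 0 ↔ z = 0 := by
  rw [ell0, Set.ncard_eq_zero (Set.toFinite _), Function.support_eq_empty_iff]

theorem ell0_pos_iff {z : Fin d → ℝ} : 0 < ell0 z ↔ z ≠ 0 :=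
  pos_iff_ne_zero.trans ell0_eq_zero_iff.not

theorem ell0_neg (z : Fin d → ℝ) : ell0 (-z) = ell0 z := by
  rw [ell0, ell0, Function.support_neg]

theorem ell0_smul_le (c : ℝ) (z : Fin d → ℝ) : ell0 (c • z) ≤ ell0 z :=
  Set.ncard_le_ncard (Function.support_const_smul_subset c z) (Set.toFinite _)

theorem ell0_single_le (i : Fin d) (c : ℝ) : ell0 (Pi.single i c) ≤ 1 := by
  simpa only [ell0, Set.ncard_singleton] using
    Set.ncard_le_ncard (Pi.support_single_subset (i := i) (a := c)) (Set.toFinite _)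

theorem ell0_le_card_of_mem_RK {K : Finset (Fin d)} {z : Fin d → ℝ} (hz : z ∈ RK K) :
    ell0 z ≤ K.card := by
  rw [← Set.ncard_coe_finset]
  exact Set.ncard_le_ncard (fun i hi => by_contra fun h => hi (hz i h)) (Set.toFinite _)

theorem exists_mem_RK_card_eq_ell0 (z : Fin d → ℝ) :
    ∃ K : Finset (Fin d), z ∈ RK K ∧ K.card = ell0 z :=
  ⟨(Set.toFinite _).toFinset, fun j hj => by simpa using hj,
    (Set.ncard_eq_toFinset_card _ _).symm⟩

theorem exists_ell0_add_smul_eq {z : Fin d → ℝ} {k : ℕ} (hz : ell0 z ≤ k) (hk : k ≤ d) :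
    ∃ w : Fin d → ℝ, ∀ t : ℝ, t ≠ 0 → ell0 (z + t • w) = k := by
  classical
  obtain ⟨K, hzK, -, hK⟩ := Set.exists_subsuperset_card_eq (Set.subset_univ (Function.support z))
    hz (by simpa using hk)
  refine ⟨fun i => if i ∈ K ∧ z i = 0 then 1 else 0, fun t ht => ?_⟩
  rw [ell0, ← hK]
  congr 1
  ext i
  by_cases hzi : z i = 0
  · simp [hzi, ht]
  · simp [hzi, hzK hzi]

end Sparsity

section DualCoord

variable {d : ℕ} {N : (Fin d → ℝ) → ℝ}

theorem restStar_set_bddAbove (hN : IsNorm N) (K : Finset (Fin d)) (w : Fin d → ℝ) :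
    BddAbove {r | ∃ x ∈ RK K, N x ≤ 1 ∧ r = dotp x w} := by
  obtain ⟨C, hC⟩ := hN.exists_dotp_le w
  exact ⟨C, by rintro _ ⟨x, -, hx, rfl⟩; exact hC x hx⟩

theorem le_restStar (hN : IsNorm N) {K : Finset (Fin d)} {x : Fin d → ℝ} (hx : x ∈ RK K)
    (hx1 : N x ≤ 1) (w : Fin d → ℝ) : dotp x w ≤ restStar N K w :=
  le_csSup (restStar_set_bddAbove hN K w) ⟨x, hx, hx1, rfl⟩

theorem restStar_le (hN : IsNorm N) {K : Finset (Fin d)} {w : Fin d → ℝ} {M : ℝ}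
    (h : ∀ x ∈ RK K, N x ≤ 1 → dotp x w ≤ M) : restStar N K w ≤ M :=
  csSup_le ⟨0, 0, fun _ _ => rfl, by simp [hN.map_zero], by simp [dotp]⟩
    (by rintro _ ⟨x, hx, hx1, rfl⟩; exact h x hx hx1)

theorem dualCoord_set_bddAbove (hN : IsNorm N) (k : ℕ) (y : Fin d → ℝ) :
    BddAbove {r | ∃ K : Finset (Fin d), K.card ≤ k ∧ r = restStar N K (projK K y)} := by
  obtain ⟨C, hC⟩ := hN.exists_dotp_le y
  refine ⟨C, ?_⟩
  rintro _ ⟨K, -, rfl⟩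
  exact restStar_le hN fun x hx hx1 => (dotp_projK hx y).trans_le (hC x hx1)

theorem restStar_le_dualCoord (hN : IsNorm N) {k : ℕ} {K : Finset (Fin d)} (hK : K.card ≤ k)
    (y : Fin d → ℝ) : restStar N K (projK K y) ≤ dualCoord N k y :=
  le_csSup (dualCoord_set_bddAbove hN k y) ⟨K, hK, rfl⟩

theorem dualCoord_nonneg (hN : IsNorm N) (k : ℕ) (y : Fin d → ℝ) : 0 ≤ dualCoord N k y := by
  have h0 := le_restStar hN (K := ∅) (x := 0) (fun _ _ => rfl) (by simp [hN.map_zero]) (projK ∅ y)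
  rw [dotp_zero_left] at h0
  exact h0.trans (restStar_le_dualCoord hN (by simp) y)

theorem dualCoord_le (hN : IsNorm N) {k : ℕ} {y : Fin d → ℝ} {M : ℝ} (hM : 0 ≤ M)
    (h : ∀ z, z ≠ 0 → ell0 z ≤ k → dotp z y ≤ M * N z) : dualCoord N k y ≤ M := by
  refine csSup_le ⟨_, ∅, by simp, rfl⟩ ?_
  rintro _ ⟨K, hK, rfl⟩
  refine restStar_le hN fun x hx hx1 => ?_
  rw [dotp_projK hx]
  rcases eq_or_ne x 0 with rfl | hx0
  · rwa [dotp_zero_left]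
  · exact (h x hx0 ((ell0_le_card_of_mem_RK hx).trans hK)).trans
      (mul_le_of_le_one_right hM hx1)

theorem dotp_le_dualCoord_mul (hN : IsNorm N) {k : ℕ} {z : Fin d → ℝ} (hz : ell0 z ≤ k)
    (y : Fin d → ℝ) : dotp z y ≤ dualCoord N k y * N z := by
  rcases eq_or_ne z 0 with rfl | hz0
  · rw [dotp_zero_left, hN.map_zero, mul_zero]
  obtain ⟨K, hzK, hK⟩ := exists_mem_RK_card_eq_ell0 z
  have hzK' : (N z)⁻¹ • z ∈ RK K := fun j hj => by simp [hzK j hj]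
  have h := (le_restStar hN hzK' (hN.inv_smul_self hz0).le (projK K y)).trans
    (restStar_le_dualCoord hN (hK.trans_le hz) y)
  rwa [dotp_projK hzK', dotp_smul_left, inv_mul_le_iff₀ (hN.pos hz0), mul_comm] at h

theorem capra_of_ne_zero {z : Fin d → ℝ} (hz : z ≠ 0) (y : Fin d → ℝ) :
    capra N z y = dotp z y / N z := if_neg hz

theorem capra_le_dualCoord (hN : IsNorm N) (z y : Fin d → ℝ) :
    capra N z y ≤ dualCoord N (ell0 z) y := by
  rcases eq_or_ne z 0 with rfl | hz
  · simpa [capra] using dualCoord_nonneg hN _ y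
  · rw [capra_of_ne_zero hz, div_le_iff₀ (hN.pos hz)]
    exact dotp_le_dualCoord_mul hN le_rfl y

theorem dualCoord_zero_left (hN : IsNorm N) (y : Fin d → ℝ) : dualCoord N 0 y = 0 :=
  (dualCoord_le hN le_rfl fun _ hz hz0 => absurd (ell0_pos_iff.2 hz) hz0.not_gt).antisymm
    (dualCoord_nonneg hN 0 y)

theorem dualCoord_smul_le (hN : IsNorm N) (k : ℕ) {a : ℝ} (ha : 0 ≤ a) (y : Fin d → ℝ) :
    dualCoord N k (a • y) ≤ a * dualCoord N k y := by
  refine dualCoord_le hN (mul_nonneg ha (dualCoord_nonneg hN k y)) fun z _ hz => ?_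
  rw [dotp_smul_right, mul_assoc]
  exact mul_le_mul_of_nonneg_left (dotp_le_dualCoord_mul hN hz y) ha

end DualCoord

section Density

variable {d : ℕ} {N : (Fin d → ℝ) → ℝ}

/-- The ratio `⟨z, y⟩ / N z` is continuous at `z ≠ 0`, and every `k`-sparse `z` is a limit of
exactly `k`-sparse vectors `z + t • w`. -/
theorem dualCoord_le_of_forall_capra_le (hN : IsNorm N) {k : ℕ} (hk : 1 ≤ k) (hkd : k ≤ d)
    {y : Fin d → ℝ} {M : ℝ} (h : ∀ z, ell0 z = k → capra N z y ≤ M) : dualCoord N k y ≤ M := by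
  have hM : 0 ≤ M := by
    obtain ⟨w, hw⟩ := exists_ell0_add_smul_eq (z := 0) (by simp [ell0]) hkd
    have hw1 : ell0 w = k := by simpa using hw 1 one_ne_zero
    have hw0 : w ≠ 0 := ell0_pos_iff.1 (hk.trans_eq hw1.symm)
    have h1 := h w hw1
    have h2 := h (-w) (by rw [ell0_neg, hw1])
    rw [capra_of_ne_zero hw0] at h1
    rw [capra_of_ne_zero (neg_ne_zero.2 hw0), hN.map_neg, dotp_neg_left, neg_div] at h2
    linarith
  refine dualCoord_le hN hM fun z hz hzk => ?_
  obtain ⟨w, hw⟩ := exists_ell0_add_smul_eq hzk hkd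
  have hpath : Tendsto (fun t : ℝ => z + t • w) (𝓝[≠] 0) (𝓝 z) :=
    tendsto_nhdsWithin_of_tendsto_nhds
      ((by fun_prop : Continuous fun t : ℝ => z + t • w).tendsto' 0 z (by simp))
  have hratio : ContinuousAt (fun v => dotp v y / N v) z :=
    (by unfold dotp; fun_prop : Continuous fun v => dotp v y).continuousAt.div
      hN.continuous.continuousAt (hN.pos hz).ne'
  have hle : ∀ᶠ t in 𝓝[≠] (0 : ℝ), dotp (z + t • w) y / N (z + t • w) ≤ M := by
    filter_upwards [self_mem_nhdsWithin] with t ht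
    have hne : z + t • w ≠ 0 := ell0_pos_iff.1 (hk.trans_eq (hw t ht).symm)
    rw [← capra_of_ne_zero hne]
    exact h _ (hw t ht)
  have hzM := le_of_tendsto (hratio.tendsto.comp hpath) hle
  rwa [div_le_iff₀ (hN.pos hz)] at hzM

theorem isLUB_capra_image (hN : IsNorm N) {k : ℕ} (hk : 1 ≤ k) (hkd : k ≤ d) (y : Fin d → ℝ) :
    IsLUB ((fun z => capra N z y) '' {z | ell0 z = k}) (dualCoord N k y) :=
  ⟨by rintro _ ⟨z, hz, rfl⟩; exact hz ▸ capra_le_dualCoord hN z y,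
    fun _ hM => dualCoord_le_of_forall_capra_le hN hk hkd fun z hz => hM ⟨z, hz, rfl⟩⟩

end Density

section CoordNorm

variable {d : ℕ} {N : (Fin d → ℝ) → ℝ}

theorem coordNorm_set_bddAbove (hN : IsNorm N) {k : ℕ} (hk : 1 ≤ k) (x : Fin d → ℝ) :
    BddAbove {r | ∃ u, dualCoord N k u ≤ 1 ∧ r = dotp x u} := by
  refine ⟨∑ i, N (Pi.single i (x i)), ?_⟩
  rintro _ ⟨u, hu, rfl⟩
  calc dotp x u = (∑ i, Pi.single i (x i)) ⬝ᵥ u := by rw [Finset.univ_sum_single]; rfl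
    _ = ∑ i, dotp (Pi.single i (x i)) u := sum_dotProduct _ _ _
    _ ≤ ∑ i, N (Pi.single i (x i)) := Finset.sum_le_sum fun i _ =>
        (dotp_le_dualCoord_mul hN ((ell0_single_le i (x i)).trans hk) u).trans
          (mul_le_of_le_one_left (hN.nonneg _) hu)

theorem dotp_le_coordNorm (hN : IsNorm N) {k : ℕ} (hk : 1 ≤ k) {x u : Fin d → ℝ}
    (hu : dualCoord N k u ≤ 1) : dotp x u ≤ coordNorm N k x :=
  le_csSup (coordNorm_set_bddAbove hN hk x) ⟨u, hu, rfl⟩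

theorem coordNorm_le (hN : IsNorm N) {k : ℕ} {x : Fin d → ℝ} {M : ℝ}
    (h : ∀ u, dualCoord N k u ≤ 1 → dotp x u ≤ M) : coordNorm N k x ≤ M := by
  have h0 : dualCoord N k 0 ≤ 1 :=
    dualCoord_le hN zero_le_one fun z _ _ => by rw [dotp_zero_right, one_mul]; exact hN.nonneg z
  exact csSup_le ⟨_, 0, h0, rfl⟩ (by rintro _ ⟨u, hu, rfl⟩; exact h u hu)

theorem coordNorm_le_norm (hN : IsNorm N) {k : ℕ} {z : Fin d → ℝ} (hz : ell0 z ≤ k) :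
    coordNorm N k z ≤ N z :=
  coordNorm_le hN fun u hu =>
    (dotp_le_dualCoord_mul hN hz u).trans (mul_le_of_le_one_left (hN.nonneg z) hu)

theorem coordNorm_eq_norm (hN : IsNorm N) {k : ℕ} (hk : 1 ≤ k) {x : Fin d → ℝ} (hx : x ≠ 0)
    (hxk : ell0 x ≤ k) : coordNorm N k x = N x := by
  obtain ⟨u, hxu, hu⟩ := hN.exists_dual_vector hx
  refine (coordNorm_le_norm hN hxk).antisymm (hxu ▸ dotp_le_coordNorm hN hk ?_)
  exact dualCoord_le hN zero_le_one fun z _ _ => by rw [one_mul]; exact hu z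

theorem dotp_le_dualCoord_of_coordNorm_le_one (hN : IsNorm N) {k : ℕ} (hk : 1 ≤ k)
    {x : Fin d → ℝ} (hx : coordNorm N k x ≤ 1) (y : Fin d → ℝ) : dotp x y ≤ dualCoord N k y := by
  refine le_of_forall_gt_imp_ge_of_dense fun t ht => ?_
  have htpos : 0 < t := (dualCoord_nonneg hN k y).trans_lt ht
  have hu : dualCoord N k (t⁻¹ • y) ≤ 1 :=
    (dualCoord_smul_le hN k (inv_nonneg.2 htpos.le) y).trans ((inv_mul_le_one₀ htpos).2 ht.le)
  have h := (dotp_le_coordNorm hN hk hu).trans hx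
  rwa [dotp_smul_right, inv_mul_le_one₀ htpos] at h

theorem forall_dotp_sub_nonpos_iff_dualCoord_le_capra (hN : IsNorm N) {x : Fin d → ℝ}
    (hx : x ≠ 0) (y : Fin d → ℝ) :
    (∀ x', coordNorm N (ell0 x) x' ≤ 1 → dotp (x' - (coordNorm N (ell0 x) x)⁻¹ • x) y ≤ 0) ↔
      dualCoord N (ell0 x) y ≤ capra N x y := by
  have hl : 1 ≤ ell0 x := ell0_pos_iff.2 hx
  simp only [coordNorm_eq_norm hN hl hx le_rfl, capra_of_ne_zero hx, dotp_sub_left,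
    dotp_smul_left, sub_nonpos, inv_mul_eq_div]
  constructor
  · intro h
    have hM : 0 ≤ dotp x y / N x := by
      simpa [dotp_zero_left] using h 0 ((coordNorm_le_norm hN (by simp [ell0])).trans
        (by simp [hN.map_zero]))
    refine dualCoord_le hN hM fun z hz hzl => ?_
    have h1 := h ((N z)⁻¹ • z) ((coordNorm_le_norm hN ((ell0_smul_le _ z).trans hzl)).trans
      (hN.inv_smul_self hz).le)
    rwa [dotp_smul_left, inv_mul_le_iff₀ (hN.pos hz), mul_comm] at h1
  · exact fun h x' hx' => (dotp_le_dualCoord_of_coordNorm_le_one hN hl hx' y).trans h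

end CoordNorm

theorem EReal.coe_add_le_of_isLUB {S : Set ℝ} {a : ℝ} (ha : IsLUB S a) {c s : EReal}
    (h : ∀ r ∈ S, (r : EReal) + c ≤ s) : (a : EReal) + c ≤ s := by
  obtain ⟨r₀, hr₀⟩ := ha.nonempty
  induction c using EReal.rec with
  | bot => simp
  | top => simpa using h r₀ hr₀
  | coe c =>
    induction s using EReal.rec with
    | bot => simpa using h r₀ hr₀
    | top => exact le_top
    | coe s =>
      norm_cast at h ⊢
      linarith [ha.2 fun r hr => show r ≤ s - c by linarith [h r hr]]

theorem capraConj_comp_ell0 {d : ℕ} {N : (Fin d → ℝ) → ℝ} (hN : IsNorm N) (φ : ℕ → EReal)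
    (y : Fin d → ℝ) :
    capraConj N (fun z => φ (ell0 z)) y = ⨆ (j) (_ : j ≤ d), (dualCoord N j y : EReal) + -φ j := by
  have hterm : ∀ z, (capra N z y : EReal) + -φ (ell0 z) ≤ capraConj N (fun z => φ (ell0 z)) y :=
    fun z => le_iSup (fun z => (capra N z y : EReal) + -φ (ell0 z)) z
  refine le_antisymm (iSup_le fun z => ?_) (iSup₂_le fun j hj => ?_)
  · refine le_trans ?_ (le_iSup₂ (f := fun j (_ : j ≤ d) => (dualCoord N j y : EReal) + -φ j)
      (ell0 z) (ell0_le z))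
    gcongr
    exact capra_le_dualCoord hN z y
  · rcases Nat.eq_zero_or_pos j with rfl | hj1
    · simpa [dualCoord_zero_left hN, capra, ell0] using hterm 0
    · exact EReal.coe_add_le_of_isLUB (isLUB_capra_image hN hj1 hj y) <| by
        rintro _ ⟨z, hz : ell0 z = j, rfl⟩
        exact hz ▸ hterm z

theorem statement18 {d : ℕ} (N : (Fin d → ℝ) → ℝ) (hN : IsNorm N) (φ : ℕ → EReal)
    (x : Fin d → ℝ) (hx : x ≠ 0)
    (hbot : φ (ell0 x) ≠ ⊥) (htop : φ (ell0 x) ≠ ⊤) (y : Fin d → ℝ) :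
    (capraConj N (fun z => φ (ell0 z)) y
        = ((capra N x y : ℝ) : EReal) + (- φ (ell0 x)))
      ↔ ((∀ x' : Fin d → ℝ, coordNorm N (ell0 x) x' ≤ 1 →
            dotp (x' - (coordNorm N (ell0 x) x)⁻¹ • x) y ≤ 0) ∧
          ∀ j : ℕ, j ≤ d →
            ((dualCoord N j y : ℝ) : EReal) + (- φ j)
              ≤ ((dualCoord N (ell0 x) y : ℝ) : EReal) + (- φ (ell0 x))) := by
  rw [capraConj_comp_ell0 hN, forall_dotp_sub_nonpos_iff_dualCoord_le_capra hN hx,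
    ← iSup₂_le_iff]
  obtain ⟨r, hr⟩ : ∃ r : ℝ, φ (ell0 x) = r := ⟨_, (EReal.coe_toReal htop hbot).symm⟩
  have hcapra : capra N x y ≤ dualCoord N (ell0 x) y := capra_le_dualCoord hN x y
  have hAS : (dualCoord N (ell0 x) y : EReal) + -φ (ell0 x)
      ≤ ⨆ (j) (_ : j ≤ d), (dualCoord N j y : EReal) + -φ j :=
    le_iSup₂ (f := fun j (_ : j ≤ d) => (dualCoord N j y : EReal) + -φ j) _ (ell0_le x)
  rw [hr] at hAS ⊢
  generalize (⨆ (j) (_ : j ≤ d), (dualCoord N j y : EReal) + -φ j) = S at hAS ⊢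
  constructor
  · rintro rfl
    norm_cast at hAS ⊢
    exact ⟨by linarith, by linarith⟩
  · rintro ⟨h1, h2⟩
    norm_cast at hAS h2 ⊢
    rw [le_antisymm hcapra h1]
    exact le_antisymm h2 hAS
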